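/- arXiv:1904.08339 — 2 statements merged into one kernel-verified Lean document; each statement's English description precedes it below -/
import Mathlib

section
/- For 0 ≤ j ≤ k−3, the double-difference row satisfies dΔ^j = (dΔ^{j+1} − 2^j) ∪ (dΔ^{j+1} + 2^j) as sets, where dΔ^j = Δ^{j+1} − Δ^j and Δ^j = X^{j+1} − X^j are termwise differences of rows of the k-bonacci positions table (k ≥ 4 so that dΔ^{j+1} is defined). -/
/-- The k-bonacci substitution on the alphabet {0,…,k−1}. -/
def subW (k : ℕ) (w : List ℕ) : List ℕ :=
  w.flatMap (fun j => if j + 1 < k then [0, j + 1] else [0])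

/-- The k-bonacci word (0-indexed). -/
def kbonacci (k n : ℕ) : ℕ := ((subW k)^[n + 1] [0]).getD n 0

/-- X^j_n: the 1-based position of the n-th (1-based) occurrence of letter j. -/
noncomputable def Xpos (k j n : ℕ) : ℕ :=
  Nat.nth (fun m => kbonacci k m = j) (n - 1) + 1

/-- Δ^j_n = X^{j+1}_n − X^j_n. -/
noncomputable def Δrow (k j n : ℕ) : ℕ := Xpos k (j + 1) n - Xpos k j n

/-- dΔ^j_n = Δ^{j+1}_n − Δ^j_n. -/
noncomputable def dΔrow (k j n : ℕ) : ℕ := Δrow k (j + 1) n - Δrow k j n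

/-!
Since `ω = σ(ω)`, every occurrence of `j + 1` is the second letter of the block `σ(j) = 0 (j+1)`
produced by an occurrence of `j`, in an order-preserving way. Hence, with `P = X^j_n - 1`, the
`n`-th occurrence of `j + 1` is at (0-based) position `|σ(ω[0, P))| + 1`, and counting lengths of
images gives `dΔ^j_n = #{i ≤ P | ω i ≠ k - 2}`.

Applying `σ` repeatedly, an occurrence of `l + 1` ends a copy of `σ^(l+1)(0)` and is followed by a
copy of `σ^l(0)`. So the positions at distance `2^l` on both sides carry `l`, and only letters
`≤ l + 1` lie in between; conversely every occurrence of `l` has an occurrence of `l + 1` at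
distance `2^l` on one side. As `j + 1 < k - 2`, moving by `2^j` between an occurrence of `j` and
one of `j + 1` changes the count by exactly `2^j`.
-/

namespace KBonacci

variable {k : ℕ}

def word (k l : ℕ) : List ℕ := (subW k)^[l] [0]

def wordPrefix (k n : ℕ) : List ℕ := (List.range n).map (kbonacci k)

/-- Since `ω = σ(ω)` is the concatenation of the blocks `σ(ω q)`, the block of position `q`
starts at position `blockStart k q`. -/
def blockStart (k q : ℕ) : ℕ := (subW k (wordPrefix k q)).length

def countNe (k c n : ℕ) : ℕ := (wordPrefix k n).countP (· ≠ c)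

lemma subW_append (u w : List ℕ) : subW k (u ++ w) = subW k u ++ subW k w :=
  List.flatMap_append

lemma subW_singleton (x : ℕ) : subW k [x] = if x + 1 < k then [0, x + 1] else [0] := by
  simp [subW]

lemma mem_subW {x : ℕ} {w : List ℕ} (h : x ∈ subW k w) :
    x = 0 ∨ ∃ y ∈ w, x = y + 1 := by
  obtain ⟨y, hy, hx⟩ := List.mem_flatMap.mp h
  split_ifs at hx <;> simp only [List.mem_cons, List.not_mem_nil, or_false] at hx <;> grind

lemma length_subW (w : List ℕ) : (subW k w).length = w.length + w.countP (· + 1 < k) := by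
  induction w with
  | nil => rfl
  | cons x w ih =>
    rw [← List.singleton_append, subW_append, List.length_append, ih, subW_singleton]
    split_ifs <;> grind

lemma countP_subW (hk : 2 ≤ k) (w : List ℕ) :
    (subW k w).countP (· + 1 < k) = w.length + w.countP (· + 2 < k) := by
  induction w with
  | nil => rfl
  | cons x w ih =>
    rw [← List.singleton_append, subW_append, List.countP_append, ih, subW_singleton]
    split_ifs <;> grind

lemma countP_add_countP_ne (hk : 2 ≤ k) (w : List ℕ) :
    w.countP (· + 1 < k) + w.countP (· ≠ k - 2) = w.length + w.countP (· + 2 < k) := by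
  induction w with
  | nil => rfl
  | cons x w ih => grind

lemma word_succ (l : ℕ) : word k (l + 1) = subW k (word k l) :=
  Function.iterate_succ_apply' _ _ _

lemma le_of_mem_word {l x : ℕ} (h : x ∈ word k l) : x ≤ l := by
  induction l generalizing x with
  | zero => simp_all [word]
  | succ l ih =>
    rw [word_succ] at h
    obtain rfl | ⟨y, hy, rfl⟩ := mem_subW h
    · omega
    · exact Nat.succ_le_succ (ih hy)

lemma length_word {l : ℕ} (h : l < k) : (word k l).length = 2 ^ l := by
  induction l with
  | zero => rfl
  | succ l ih =>
    have hall : (word k l).countP (· + 1 < k) = (word k l).length :=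
      List.countP_eq_length.mpr fun x hx => decide_eq_true (by have := le_of_mem_word hx; omega)
    rw [word_succ, length_subW, hall, ih (by omega), pow_succ]
    ring

lemma exists_word_eq_append_singleton {l : ℕ} (h : l < k) : ∃ u, word k l = u ++ [l] := by
  induction l with
  | zero => exact ⟨[], rfl⟩
  | succ l ih =>
    obtain ⟨u, hu⟩ := ih (by omega)
    refine ⟨subW k u ++ [0], ?_⟩
    rw [word_succ, hu, subW_append, subW_singleton, if_pos h]
    simp

lemma word_prefix_word_succ (hk : 2 ≤ k) (l : ℕ) : word k l <+: word k (l + 1) := by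
  induction l with
  | zero =>
    refine ⟨[1], ?_⟩
    rw [word_succ, show word k 0 = [0] from rfl, subW_singleton, if_pos (by omega)]
    rfl
  | succ l ih => rw [word_succ, word_succ (l + 1)]; exact ih.flatMap _

lemma word_prefix_word (hk : 2 ≤ k) {l m : ℕ} (h : l ≤ m) : word k l <+: word k m := by
  induction m, h using Nat.le_induction with
  | base => exact List.prefix_refl _
  | succ m _ ih => exact ih.trans (word_prefix_word_succ hk m)

lemma lt_length_word (hk : 2 ≤ k) (l : ℕ) : l < (word k l).length := by
  induction l with
  | zero => simp [word]
  | succ l ih =>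
    have h0 : 0 ∈ word k l := (word_prefix_word hk (Nat.zero_le l)).subset (by simp [word])
    have : 0 < (word k l).countP (· + 1 < k) :=
      List.countP_pos_iff.mpr ⟨0, h0, decide_eq_true (by omega)⟩
    rw [word_succ, length_subW]
    omega

lemma length_wordPrefix (n : ℕ) : (wordPrefix k n).length = n := by simp [wordPrefix]

lemma wordPrefix_succ (n : ℕ) : wordPrefix k (n + 1) = wordPrefix k n ++ [kbonacci k n] := by
  simp [wordPrefix, List.range_succ]

lemma length_add_length_of_append {u v : List ℕ} {n : ℕ} (h : u ++ v = wordPrefix k n) :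
    u.length + v.length = n := by
  rw [← List.length_append, h, length_wordPrefix]

lemma getElem?_wordPrefix {i n : ℕ} (h : i < n) : (wordPrefix k n)[i]? = some (kbonacci k i) := by
  simp [wordPrefix, List.getElem?_range h]

lemma kbonacci_eq_of_append {u v : List ℕ} {x n : ℕ} (h : u ++ x :: v = wordPrefix k n) :
    kbonacci k u.length = x := by
  have hlen : u.length < n := by
    have := length_add_length_of_append h
    rw [List.length_cons] at this
    omega
  have := congrArg (·[u.length]?) h
  simp only [List.getElem?_append_right le_rfl, Nat.sub_self, List.getElem?_cons_zero,
    getElem?_wordPrefix hlen] at this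
  exact (Option.some.inj this).symm

lemma take_wordPrefix {m n : ℕ} (h : m ≤ n) : (wordPrefix k n).take m = wordPrefix k m := by
  rw [wordPrefix, ← List.map_take, List.take_range, min_eq_left h, wordPrefix]

lemma eq_wordPrefix_of_append {u v : List ℕ} {n : ℕ} (h : u ++ v = wordPrefix k n) :
    u = wordPrefix k u.length := by
  have hlen : u.length ≤ n := (Nat.le_add_right _ _).trans (length_add_length_of_append h).le
  calc u = (wordPrefix k n).take u.length := by rw [← h, List.take_left]
    _ = wordPrefix k u.length := take_wordPrefix hlen

lemma wordPrefix_eq_take_word (hk : 2 ≤ k) {n l : ℕ} (h : n ≤ (word k l).length) :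
    wordPrefix k n = (word k l).take n := by
  refine List.ext_getElem (by rw [length_wordPrefix, List.length_take]; omega) fun i hi _ => ?_
  have hi' : i < n := by simpa [length_wordPrefix] using hi
  have hlt : i < (word k (i + 1)).length := by have := lt_length_word hk (i + 1); omega
  simp only [wordPrefix, List.getElem_map, List.getElem_range, List.getElem_take]
  rw [kbonacci, ← word, List.getD_eq_getElem _ _ hlt]
  rcases le_total (i + 1) l with hil | hli
  · exact (word_prefix_word hk hil).getElem hlt
  · exact ((word_prefix_word hk hli).getElem (by omega)).symm

lemma subW_wordPrefix (hk : 2 ≤ k) (q : ℕ) :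
    subW k (wordPrefix k q) = wordPrefix k (blockStart k q) := by
  have hq : q ≤ (word k q).length := (lt_length_word hk q).le
  have hpre : subW k (wordPrefix k q) <+: word k (q + 1) := by
    rw [wordPrefix_eq_take_word hk hq, word_succ]
    exact (List.take_prefix _ _).flatMap _
  rw [List.prefix_iff_eq_take.mp hpre, ← wordPrefix_eq_take_word hk hpre.length_le]
  rfl

lemma wordPrefix_blockStart_succ (hk : 2 ≤ k) (q : ℕ) :
    wordPrefix k (blockStart k q) ++ subW k [kbonacci k q] =
      wordPrefix k (blockStart k (q + 1)) := by
  rw [← subW_wordPrefix hk, ← subW_wordPrefix hk, wordPrefix_succ, subW_append]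

lemma blockStart_succ (q : ℕ) :
    blockStart k (q + 1) = blockStart k q + (subW k [kbonacci k q]).length := by
  rw [blockStart, blockStart, wordPrefix_succ, subW_append, List.length_append]

lemma blockStart_succ_of_lt {q : ℕ} (h : kbonacci k q + 1 < k) :
    blockStart k (q + 1) = blockStart k q + 2 := by
  rw [blockStart_succ, subW_singleton, if_pos h]
  rfl

lemma blockStart_succ_of_not_lt {q : ℕ} (h : ¬kbonacci k q + 1 < k) :
    blockStart k (q + 1) = blockStart k q + 1 := by
  rw [blockStart_succ, subW_singleton, if_neg h]
  rfl

lemma blockStart_eq (q : ℕ) : blockStart k q = q + (wordPrefix k q).countP (· + 1 < k) := by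
  rw [blockStart, length_subW, length_wordPrefix]

lemma blockStart_strictMono : StrictMono (blockStart k) :=
  strictMono_nat_of_lt_succ fun q => by
    rw [blockStart_succ, subW_singleton]
    split_ifs <;> simp

lemma kbonacci_blockStart (hk : 2 ≤ k) (q : ℕ) : kbonacci k (blockStart k q) = 0 := by
  have h := wordPrefix_blockStart_succ hk q
  rw [subW_singleton] at h
  split_ifs at h <;> simpa [length_wordPrefix] using kbonacci_eq_of_append h

lemma kbonacci_blockStart_add_one (hk : 2 ≤ k) {q : ℕ} (h : kbonacci k q + 1 < k) :
    kbonacci k (blockStart k q + 1) = kbonacci k q + 1 := by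
  have e := wordPrefix_blockStart_succ hk q
  rw [subW_singleton, if_pos h, List.append_cons] at e
  simpa [length_wordPrefix] using kbonacci_eq_of_append e

lemma exists_eq_blockStart (p : ℕ) :
    ∃ q, p = blockStart k q ∨ (p = blockStart k q + 1 ∧ kbonacci k q + 1 < k) := by
  induction p with
  | zero => exact ⟨0, Or.inl (by simp [blockStart, wordPrefix, subW])⟩
  | succ p ih =>
    obtain ⟨q, rfl | ⟨rfl, hq⟩⟩ := ih
    · by_cases hq : kbonacci k q + 1 < k
      · exact ⟨q, Or.inr ⟨rfl, hq⟩⟩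
      · exact ⟨q + 1, Or.inl (blockStart_succ_of_not_lt hq).symm⟩
    · exact ⟨q + 1, Or.inl (blockStart_succ_of_lt hq).symm⟩

lemma kbonacci_lt (hk : 2 ≤ k) (p : ℕ) : kbonacci k p < k := by
  obtain ⟨q, rfl | ⟨rfl, hq⟩⟩ := exists_eq_blockStart (k := k) p
  · rw [kbonacci_blockStart hk]
    omega
  · rwa [kbonacci_blockStart_add_one hk hq]

lemma exists_parent (hk : 2 ≤ k) {p l : ℕ} (h : kbonacci k p = l + 1) :
    ∃ q, blockStart k q + 1 = p ∧ kbonacci k q = l := by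
  obtain ⟨q, rfl | ⟨rfl, hq⟩⟩ := exists_eq_blockStart (k := k) p
  · rw [kbonacci_blockStart hk] at h
    omega
  · rw [kbonacci_blockStart_add_one hk hq] at h
    exact ⟨q, rfl, by omega⟩

lemma countNe_of_append {c m n : ℕ} {v : List ℕ} (h : wordPrefix k m ++ v = wordPrefix k n)
    (hv : ∀ x ∈ v, x ≠ c) : countNe k c n = countNe k c m + (n - m) := by
  have hlen := length_add_length_of_append h
  rw [length_wordPrefix] at hlen
  rw [countNe, countNe, ← h, List.countP_append,
    (List.countP_eq_length (l := v)).mpr (by simpa using hv)]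
  omega

lemma blockStart_of_append {m n : ℕ} {v : List ℕ} (h : wordPrefix k m ++ v = wordPrefix k n)
    (hv : ∀ x ∈ v, x + 1 < k) : blockStart k n = blockStart k m + 2 * (n - m) := by
  have hlen := length_add_length_of_append h
  rw [length_wordPrefix] at hlen
  rw [blockStart, blockStart, ← h, subW_append, List.length_append, length_subW v,
    (List.countP_eq_length (l := v)).mpr (by simpa using hv)]
  omega

lemma word_isSuffix_wordPrefix (hk : 2 ≤ k) {l p : ℕ} (h : kbonacci k p = l) :
    word k l <:+ wordPrefix k (p + 1) := by
  induction l generalizing p with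
  | zero => exact ⟨wordPrefix k p, by rw [wordPrefix_succ, h]; rfl⟩
  | succ l ih =>
    obtain ⟨q, rfl, hq⟩ := exists_parent hk h
    have hlt : kbonacci k q + 1 < k := by rw [hq, ← h]; exact kbonacci_lt hk _
    obtain ⟨u, hu⟩ := ih hq
    refine ⟨subW k u, ?_⟩
    rw [word_succ, ← subW_append, hu, subW_wordPrefix hk, blockStart_succ_of_lt hlt]

lemma exists_wordPrefix_append_word (hk : 2 ≤ k) {l p : ℕ} (h : kbonacci k p = l + 1) :
    ∃ n, wordPrefix k (p + 1) ++ word k l = wordPrefix k n := by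
  induction l generalizing p with
  | zero =>
    obtain ⟨q, rfl, hq⟩ := exists_parent hk h
    refine ⟨blockStart k (q + 1) + 1, ?_⟩
    rw [wordPrefix_succ (blockStart k (q + 1)), kbonacci_blockStart hk,
      blockStart_succ_of_lt (by omega)]
    rfl
  | succ l ih =>
    obtain ⟨q, rfl, hq⟩ := exists_parent hk h
    have hlt : kbonacci k q + 1 < k := by rw [hq, ← h]; exact kbonacci_lt hk _
    obtain ⟨n, hn⟩ := ih hq
    refine ⟨blockStart k n, ?_⟩
    rw [word_succ, ← subW_wordPrefix hk n, ← hn, subW_append, subW_wordPrefix hk,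
      blockStart_succ_of_lt hlt]

lemma sub_two_pow_window (hk : 2 ≤ k) {l p : ℕ} (h : kbonacci k p = l + 1) :
    2 ^ l ≤ p ∧ kbonacci k (p - 2 ^ l) = l ∧
      ∃ v, wordPrefix k (p - 2 ^ l + 1) ++ v = wordPrefix k (p + 1) ∧
        ∀ x ∈ v, x ≤ l + 1 := by
  have hl : l + 1 < k := h ▸ kbonacci_lt hk p
  obtain ⟨u, hu⟩ := word_isSuffix_wordPrefix hk h
  obtain ⟨v, hv⟩ := word_prefix_word_succ hk l
  obtain ⟨w, hw⟩ := exists_word_eq_append_singleton (k := k) (l := l) (by omega)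
  have hulen := length_add_length_of_append hu
  have hwlen := congrArg List.length hw
  rw [length_word hl, pow_succ] at hulen
  rw [length_word (by omega), List.length_append, List.length_singleton] at hwlen
  rw [← hv, hw] at hu
  have hpos : (u ++ w).length = p - 2 ^ l := by rw [List.length_append]; omega
  have hpre : (u ++ w ++ [l]) ++ v = wordPrefix k (p + 1) := by simpa using hu
  refine ⟨by omega, ?_, v, ?_, fun x hx => le_of_mem_word (hv ▸ List.mem_append_right _ hx)⟩
  · rw [← hpos]
    exact kbonacci_eq_of_append (by simpa using hu)
  · rwa [eq_wordPrefix_of_append hpre, List.length_append, hpos, List.length_singleton] at hpre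

lemma add_two_pow_window (hk : 2 ≤ k) {l p : ℕ} (h : kbonacci k p = l + 1) :
    kbonacci k (p + 2 ^ l) = l ∧
      ∃ v, wordPrefix k (p + 1) ++ v = wordPrefix k (p + 2 ^ l + 1) ∧
        ∀ x ∈ v, x ≤ l + 1 := by
  have hl : l + 1 < k := h ▸ kbonacci_lt hk p
  obtain ⟨n, hn⟩ := exists_wordPrefix_append_word hk h
  obtain ⟨w, hw⟩ := exists_word_eq_append_singleton (k := k) (l := l) (by omega)
  have hnlen := length_add_length_of_append hn
  have hwlen := congrArg List.length hw
  rw [length_wordPrefix, length_word (by omega)] at hnlen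
  rw [length_word (by omega), List.length_append, List.length_singleton] at hwlen
  refine ⟨?_, word k l, by rw [hn]; congr 1; omega,
    fun x hx => (le_of_mem_word hx).trans l.le_succ⟩
  rw [hw, ← List.append_assoc] at hn
  have := kbonacci_eq_of_append hn
  rwa [List.length_append, length_wordPrefix, show p + 1 + w.length = p + 2 ^ l by omega] at this

lemma kbonacci_add_two_pow_or_sub {l p : ℕ} (h : kbonacci k p = l) (hl : l + 1 < k) :
    kbonacci k (p + 2 ^ l) = l + 1 ∨ 2 ^ l ≤ p ∧ kbonacci k (p - 2 ^ l) = l + 1 := by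
  have hk : 2 ≤ k := by omega
  induction l generalizing p with
  | zero =>
    obtain ⟨q, rfl | ⟨rfl, hq⟩⟩ := exists_eq_blockStart (k := k) p
    · rcases Nat.eq_zero_or_pos (kbonacci k q) with hq0 | hqpos
      · left
        simpa [hq0] using kbonacci_blockStart_add_one hk (q := q) (by omega)
      · -- `q` is itself a second letter, so the block `σ(ω (q - 1)) = 0 1` ends just before `p`.
        right
        obtain ⟨r, rfl, -⟩ := exists_parent hk (p := q) (l := kbonacci k q - 1) (by omega)
        have h0 := kbonacci_blockStart hk r
        rw [blockStart_succ_of_lt (q := blockStart k r) (by omega), pow_zero,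
          show blockStart k (blockStart k r) + 2 - 1 = blockStart k (blockStart k r) + 1 by omega,
          kbonacci_blockStart_add_one hk (by omega), h0]
        exact ⟨by omega, rfl⟩
    · rw [kbonacci_blockStart_add_one hk hq] at h
      omega
  | succ l ih =>
    obtain ⟨q, rfl, hq⟩ := exists_parent hk h
    have hpow : 2 ^ (l + 1) = 2 * 2 ^ l := by ring
    rcases ih hq (by omega) with hZ | ⟨hle, hZ⟩
    · obtain ⟨-, -, v, hv, hvle⟩ := sub_two_pow_window hk hZ
      rw [Nat.add_sub_cancel] at hv
      have hbs := blockStart_of_append hv fun x hx => by have := hvle x hx; omega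
      rw [blockStart_succ_of_lt (by omega), blockStart_succ_of_lt (by omega)] at hbs
      left
      rw [show blockStart k q + 1 + 2 ^ (l + 1) = blockStart k (q + 2 ^ l) + 1 by omega,
        kbonacci_blockStart_add_one hk (by omega), hZ]
    · obtain ⟨-, v, hv, hvle⟩ := add_two_pow_window hk hZ
      rw [Nat.sub_add_cancel hle] at hv
      have hbs := blockStart_of_append hv fun x hx => by have := hvle x hx; omega
      rw [blockStart_succ_of_lt (by omega), blockStart_succ_of_lt (by omega)] at hbs
      right
      rw [show blockStart k q + 1 - 2 ^ (l + 1) = blockStart k (q - 2 ^ l) + 1 by omega,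
        kbonacci_blockStart_add_one hk (by omega), hZ]
      exact ⟨by omega, rfl⟩

lemma countNe_sub_two_pow (hk : 2 ≤ k) {c l p : ℕ} (h : kbonacci k p = l + 1) (hc : l + 1 < c) :
    2 ^ l ≤ p ∧ kbonacci k (p - 2 ^ l) = l ∧
      countNe k c (p - 2 ^ l + 1) + 2 ^ l = countNe k c (p + 1) := by
  obtain ⟨hle, hval, v, hv, hvle⟩ := sub_two_pow_window hk h
  refine ⟨hle, hval, ?_⟩
  rw [countNe_of_append hv fun x hx => by have := hvle x hx; omega]
  generalize 2 ^ l = d at *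
  omega

lemma countNe_add_two_pow (hk : 2 ≤ k) {c l p : ℕ} (h : kbonacci k p = l + 1) (hc : l + 1 < c) :
    kbonacci k (p + 2 ^ l) = l ∧ countNe k c (p + 2 ^ l + 1) = countNe k c (p + 1) + 2 ^ l := by
  obtain ⟨hval, v, hv, hvle⟩ := add_two_pow_window hk h
  refine ⟨hval, ?_⟩
  rw [countNe_of_append hv fun x hx => by have := hvle x hx; omega]
  generalize 2 ^ l = d at *
  omega

lemma infinite_setOf_kbonacci_eq (hk : 2 ≤ k) {j : ℕ} (hj : j < k) :
    {m | kbonacci k m = j}.Infinite := by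
  induction j with
  | zero =>
    refine (Set.infinite_range_of_injective (blockStart_strictMono (k := k)).injective).mono ?_
    rintro _ ⟨q, rfl⟩
    exact kbonacci_blockStart hk q
  | succ j ih =>
    have hinj : Function.Injective (blockStart k · + 1) :=
      (add_left_injective 1).comp blockStart_strictMono.injective
    refine ((ih (by omega)).image hinj.injOn).mono ?_
    rintro _ ⟨P, hP, rfl⟩
    have hP : kbonacci k P = j := hP
    show kbonacci k (blockStart k P + 1) = j + 1
    rw [kbonacci_blockStart_add_one hk (by omega), hP]

lemma nth_kbonacci_eq_succ {j : ℕ} (hj : j + 1 < k) (n : ℕ) :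
    Nat.nth (kbonacci k · = j + 1) n = blockStart k (Nat.nth (kbonacci k · = j) n) + 1 := by
  have hk : 2 ≤ k := by omega
  have hmono : StrictMono (blockStart k · + 1) := fun a b hab => by
    simpa using blockStart_strictMono hab
  have hpred : (fun i => kbonacci k (blockStart k i + 1) = j + 1) = (kbonacci k · = j) := by
    funext i
    by_cases hi : kbonacci k i + 1 < k
    · rw [kbonacci_blockStart_add_one hk hi, Nat.add_right_cancel_iff]
    · rw [← blockStart_succ_of_not_lt hi, kbonacci_blockStart hk]
      exact propext ⟨fun h => by omega, fun h => by omega⟩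
  have hrange (p : ℕ) (hp : kbonacci k p = j + 1) : p ∈ Set.range (blockStart k · + 1) :=
    (exists_parent hk hp).imp fun _ => And.left
  have := Nat.nth_comp_of_strictMono hmono hrange (n := n)
    fun hf => absurd hf (infinite_setOf_kbonacci_eq hk hj)
  rw [hpred] at this
  exact this.symm

lemma dΔrow_succ {j : ℕ} (hj : j + 2 < k) (n : ℕ) :
    dΔrow k j (n + 1) = countNe k (k - 2) (Nat.nth (kbonacci k · = j) n + 1) := by
  have hk : 2 ≤ k := by omega
  have h1 := nth_kbonacci_eq_succ (k := k) (j := j) (by omega) n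
  have h2 := nth_kbonacci_eq_succ (k := k) (j := j + 1) (by omega) n
  rw [h1] at h2
  simp only [dΔrow, Δrow, Xpos, Nat.add_sub_cancel, h1, h2]
  set P := Nat.nth (kbonacci k · = j) n
  have hP : kbonacci k P = j :=
    Nat.nth_mem_of_infinite (infinite_setOf_kbonacci_eq hk (by omega)) n
  have e1 := blockStart_eq (k := k) P
  have e2 := blockStart_eq (k := k) (blockStart k P + 1)
  have e3 : (wordPrefix k (blockStart k P + 1)).countP (· + 1 < k) =
      P + (wordPrefix k P).countP (· + 2 < k) + 1 := by
    rw [wordPrefix_succ, kbonacci_blockStart hk, ← subW_wordPrefix hk, List.countP_append,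
      countP_subW hk, length_wordPrefix, List.countP_singleton,
      if_pos (decide_eq_true (by omega))]
  have e4 := countP_add_countP_ne hk (wordPrefix k P)
  have e5 : countNe k (k - 2) (P + 1) = (wordPrefix k P).countP (· ≠ k - 2) + 1 := by
    rw [countNe, wordPrefix_succ, List.countP_append, List.countP_singleton,
      if_pos (decide_eq_true (by omega))]
  rw [length_wordPrefix] at e4
  omega

lemma setOf_dΔrow {j : ℕ} (hj : j + 2 < k) :
    {m | ∃ n, 1 ≤ n ∧ dΔrow k j n = m} =
      (fun P => countNe k (k - 2) (P + 1)) '' {P | kbonacci k P = j} := by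
  ext m
  constructor
  · rintro ⟨_ | n, hn, rfl⟩
    · omega
    · exact ⟨_, Nat.nth_mem_of_infinite (infinite_setOf_kbonacci_eq (by omega) (by omega)) n,
        (dΔrow_succ hj n).symm⟩
  · rintro ⟨P, hP, rfl⟩
    refine ⟨Nat.count (kbonacci k · = j) P + 1, by omega, ?_⟩
    rw [dΔrow_succ hj, Nat.nth_count (p := (kbonacci k · = j)) hP]

end KBonacci

open KBonacci

theorem double_difference_union_translates_general (k j : ℕ)
    (hj : j + 1 ≤ k - 3) :
    {m | ∃ n, 1 ≤ n ∧ dΔrow k j n = m} =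
      ((fun m => m - 2 ^ j) '' {m | ∃ n, 1 ≤ n ∧ dΔrow k (j + 1) n = m}) ∪
      ((fun m => m + 2 ^ j) '' {m | ∃ n, 1 ≤ n ∧ dΔrow k (j + 1) n = m}) := by
  have hk : 2 ≤ k := by omega
  rw [setOf_dΔrow (by omega), setOf_dΔrow (by omega)]
  ext m
  simp only [Set.mem_union, Set.mem_image, exists_exists_and_eq_and]
  constructor
  · rintro ⟨P, hP, rfl⟩
    rcases kbonacci_add_two_pow_or_sub hP (by omega) with hZ | ⟨hle, hZ⟩
    · obtain ⟨-, -, hcount⟩ := countNe_sub_two_pow hk hZ (c := k - 2) (by omega)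
      rw [Nat.add_sub_cancel] at hcount
      exact Or.inl ⟨_, hZ, by omega⟩
    · obtain ⟨-, hcount⟩ := countNe_add_two_pow hk hZ (c := k - 2) (by omega)
      rw [Nat.sub_add_cancel hle] at hcount
      exact Or.inr ⟨_, hZ, by omega⟩
  · rintro (⟨Z, hZ, rfl⟩ | ⟨Z, hZ, rfl⟩)
    · obtain ⟨-, hP, hcount⟩ := countNe_sub_two_pow hk hZ (c := k - 2) (by omega)
      exact ⟨_, hP, by omega⟩
    · obtain ⟨hP, hcount⟩ := countNe_add_two_pow hk hZ (c := k - 2) (by omega)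
      exact ⟨_, hP, by omega⟩

/-- dΔ^j = (dΔ^{j+1} − 2^j) ∪ (dΔ^{j+1} + 2^j) as sets of values (k ≥ 4, with j
such that both dΔ^j and dΔ^{j+1} are defined, i.e. j + 1 ≤ k − 3). -/
theorem double_difference_union_translates (k j : ℕ) (hk : 4 ≤ k)
    (hj : j + 1 ≤ k - 3) :
    {m | ∃ n, 1 ≤ n ∧ dΔrow k j n = m} =
      ((fun m => m - 2 ^ j) '' {m | ∃ n, 1 ≤ n ∧ dΔrow k (j + 1) n = m}) ∪
      ((fun m => m + 2 ^ j) '' {m | ∃ n, 1 ≤ n ∧ dΔrow k (j + 1) n = m}) :=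
  double_difference_union_translates_general k j hj
end

section
/- In the k-bonacci positions table, the bottom row can be written as X^{k−1}_n = n + X^0_n + X^1_n + ⋯ + X^{k−1}_n − X^{k−1}_n, i.e., X^{k−1}_n = n + X^0_n + ⋯ + X^{k−2}_n for all n ≥ 1. -/
def iterSubW (k t : ℕ) : List ℕ := (subW k)^[t] [0]

def kbonacciPrefix (k n : ℕ) : List ℕ := (List.range n).map (kbonacci k)

def blockStart (k n : ℕ) : ℕ := (subW k (kbonacciPrefix k n)).length

section

variable {k : ℕ}

theorem subW_append (u v : List ℕ) : subW k (u ++ v) = subW k u ++ subW k v :=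
  List.flatMap_append

theorem subW_cons (j : ℕ) (w : List ℕ) :
    subW k (j :: w) = (if j + 1 < k then [0, j + 1] else [0]) ++ subW k w :=
  List.flatMap_cons ..

theorem subW_singleton (j : ℕ) : subW k [j] = if j + 1 < k then [0, j + 1] else [0] := by
  simp [subW]

theorem length_le_length_subW (w : List ℕ) : w.length ≤ (subW k w).length := by
  induction w with
  | nil => simp [subW]
  | cons j w ih => rw [subW_cons]; split <;> simp <;> omega

theorem count_zero_subW (w : List ℕ) : (subW k w).count 0 = w.length := by
  induction w with
  | nil => simp [subW]
  | cons j w ih => rw [subW_cons]; split <;> simp [ih]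

theorem count_succ_subW {l : ℕ} (hl : l + 1 < k) (w : List ℕ) :
    (subW k w).count (l + 1) = w.count l := by
  induction w with
  | nil => simp [subW]
  | cons j w ih =>
    rw [subW_cons, List.count_append, ih, List.count_cons]
    by_cases hj : j = l
    · subst hj; simp [hl, add_comm]
    · split <;> simp [hj]

theorem iterSubW_succ (t : ℕ) : iterSubW k (t + 1) = subW k (iterSubW k t) :=
  Function.iterate_succ_apply' _ _ _

theorem kbonacci_eq_getD (n : ℕ) : kbonacci k n = (iterSubW k (n + 1)).getD n 0 := rfl

theorem iterSubW_prefix_succ (t : ℕ) : iterSubW k t <+: iterSubW k (t + 1) := by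
  induction t with
  | zero =>
    rw [iterSubW_succ]
    simp only [iterSubW, Function.iterate_zero, id_eq, subW_singleton]
    split <;> simp
  | succ t ih =>
    obtain ⟨w, hw⟩ := ih
    exact ⟨subW k w, by rw [iterSubW_succ, iterSubW_succ (t + 1), ← hw, subW_append]⟩

theorem iterSubW_prefix_of_le {s t : ℕ} (h : s ≤ t) : iterSubW k s <+: iterSubW k t := by
  induction t, h using Nat.le_induction with
  | base => exact List.prefix_rfl
  | succ t _ ih => exact ih.trans (iterSubW_prefix_succ t)

theorem lt_length_iterSubW (hk : 2 ≤ k) (t : ℕ) : t < (iterSubW k t).length := by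
  induction t with
  | zero => simp [iterSubW]
  | succ t ih =>
    obtain ⟨w, hw⟩ := iterSubW_prefix_of_le (k := k) (Nat.zero_le t)
    have hw' : iterSubW k t = 0 :: w := hw.symm
    rw [iterSubW_succ, hw', subW_cons, if_pos (by omega)]
    rw [hw'] at ih
    have := length_le_length_subW (k := k) w
    simp only [List.length_append, List.length_cons] at ih ⊢
    omega

theorem kbonacci_eq_getElem (hk : 2 ≤ k) {t n : ℕ} (hn : n < (iterSubW k t).length) :
    kbonacci k n = (iterSubW k t)[n] := by
  have hn' : n < (iterSubW k (n + 1)).length := (lt_length_iterSubW hk _).trans' (by omega)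
  rw [kbonacci_eq_getD, List.getD_eq_getElem _ _ hn']
  rcases le_total t (n + 1) with h | h
  · exact ((iterSubW_prefix_of_le h).getElem hn).symm
  · exact (iterSubW_prefix_of_le h).getElem hn'

theorem eq_kbonacciPrefix_of_prefix (hk : 2 ≤ k) {w : List ℕ} {t : ℕ}
    (h : w <+: iterSubW k t) :
    w = kbonacciPrefix k w.length := by
  refine List.ext_getElem (by simp [kbonacciPrefix]) fun i hi _ => ?_
  simp only [kbonacciPrefix, List.getElem_map, List.getElem_range]
  rw [h.getElem hi, kbonacci_eq_getElem hk]

theorem kbonacciPrefix_eq_take (hk : 2 ≤ k) (n : ℕ) :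
    kbonacciPrefix k n = (iterSubW k n).take n := by
  rw [eq_kbonacciPrefix_of_prefix hk (List.take_prefix n _),
    List.length_take_of_le (lt_length_iterSubW hk n).le]

theorem length_kbonacciPrefix (n : ℕ) : (kbonacciPrefix k n).length = n := by
  simp [kbonacciPrefix]

theorem kbonacciPrefix_succ (n : ℕ) :
    kbonacciPrefix k (n + 1) = kbonacciPrefix k n ++ [kbonacci k n] := by
  simp [kbonacciPrefix, List.range_succ]

/-- The fixed-point property `θ(ω) = ω`, read on prefixes. -/
theorem subW_kbonacciPrefix (hk : 2 ≤ k) (n : ℕ) :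
    subW k (kbonacciPrefix k n) = kbonacciPrefix k (blockStart k n) := by
  refine eq_kbonacciPrefix_of_prefix hk (t := n + 1) ⟨subW k ((iterSubW k n).drop n), ?_⟩
  rw [kbonacciPrefix_eq_take hk, ← subW_append, List.take_append_drop, iterSubW_succ]

theorem kbonacciPrefix_blockStart_succ (hk : 2 ≤ k) (n : ℕ) :
    kbonacciPrefix k (blockStart k (n + 1)) =
      kbonacciPrefix k (blockStart k n) ++ subW k [kbonacci k n] := by
  rw [← subW_kbonacciPrefix hk, ← subW_kbonacciPrefix hk, kbonacciPrefix_succ, subW_append]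

theorem kbonacci_eq_of_kbonacciPrefix_eq_append {n : ℕ} {u v : List ℕ}
    (h : kbonacciPrefix k n = u ++ v) {i : ℕ} (hi : i < v.length) :
    kbonacci k (u.length + i) = v[i] := by
  have hlen : u.length + i < (kbonacciPrefix k n).length := by simp [h, hi]
  calc kbonacci k (u.length + i) = (kbonacciPrefix k n)[u.length + i] := by simp [kbonacciPrefix]
    _ = (u ++ v)[u.length + i]'(h ▸ hlen) := List.getElem_of_eq h hlen
    _ = v[i] := by simp

theorem kbonacci_blockStart (hk : 2 ≤ k) (n : ℕ) : kbonacci k (blockStart k n) = 0 := by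
  have h := kbonacciPrefix_blockStart_succ hk n
  rw [subW_singleton] at h
  split at h <;>
    simpa [length_kbonacciPrefix] using kbonacci_eq_of_kbonacciPrefix_eq_append h (i := 0) (by simp)

theorem kbonacci_blockStart_add_one (hk : 2 ≤ k) {n : ℕ} (hn : kbonacci k n + 1 < k) :
    kbonacci k (blockStart k n + 1) = kbonacci k n + 1 := by
  have h := kbonacciPrefix_blockStart_succ hk n
  rw [subW_singleton, if_pos hn] at h
  simpa [length_kbonacciPrefix] using kbonacci_eq_of_kbonacciPrefix_eq_append h (i := 1) (by simp)

theorem blockStart_strictMono : StrictMono (blockStart k) := by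
  refine strictMono_nat_of_lt_succ fun n => ?_
  rw [blockStart, blockStart, kbonacciPrefix_succ, subW_append, List.length_append, subW_singleton]
  split <;> simp

theorem count_kbonacci_eq (l n : ℕ) :
    Nat.count (kbonacci k · = l) n = (kbonacciPrefix k n).count l := by
  induction n with
  | zero => rfl
  | succ n ih =>
    rw [Nat.count_succ, ih, kbonacciPrefix_succ, List.count_append, List.count_singleton]
    simp only [beq_iff_eq]

theorem count_kbonacci_blockStart_zero (hk : 2 ≤ k) (n : ℕ) :
    Nat.count (kbonacci k · = 0) (blockStart k n) = n := by
  rw [count_kbonacci_eq, ← subW_kbonacciPrefix hk, count_zero_subW, length_kbonacciPrefix]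

theorem count_kbonacci_blockStart_succ (hk : 2 ≤ k) {l : ℕ} (hl : l + 1 < k) (n : ℕ) :
    Nat.count (kbonacci k · = l + 1) (blockStart k n) = Nat.count (kbonacci k · = l) n := by
  rw [count_kbonacci_eq, count_kbonacci_eq, ← subW_kbonacciPrefix hk, count_succ_subW hl]

theorem infinite_setOf_kbonacci_eq (hk : 2 ≤ k) {l : ℕ} (hl : l < k) :
    {m | kbonacci k m = l}.Infinite := by
  induction l with
  | zero =>
    exact Set.infinite_of_injective_forall_mem blockStart_strictMono.injective
      (kbonacci_blockStart hk)
  | succ l ih =>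
    refine ((ih (by omega)).image (f := (blockStart k · + 1)) ?_).mono ?_
    · exact fun x _ y _ h => blockStart_strictMono.injective (Nat.add_right_cancel h)
    · rintro _ ⟨m, hm : kbonacci k m = l, rfl⟩
      rw [Set.mem_ofPred_eq, kbonacci_blockStart_add_one hk (by omega), hm]

theorem nth_kbonacci_succ (hk : 2 ≤ k) {l : ℕ} (hl : l + 1 < k) (i : ℕ) :
    Nat.nth (kbonacci k · = l + 1) i = blockStart k (Nat.nth (kbonacci k · = l) i) + 1 := by
  set p := Nat.nth (kbonacci k · = l) i
  have hinf := infinite_setOf_kbonacci_eq hk (l := l) (by omega)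
  have hp : kbonacci k p = l := Nat.nth_mem_of_infinite hinf i
  have hletter : kbonacci k (blockStart k p + 1) = l + 1 := by
    rw [kbonacci_blockStart_add_one hk (by omega), hp]
  have hcount : Nat.count (kbonacci k · = l + 1) (blockStart k p + 1) = i := by
    rw [Nat.count_succ, kbonacci_blockStart hk, count_kbonacci_blockStart_succ hk hl,
      Nat.count_nth_of_infinite hinf, if_neg (by omega), add_zero]
  rw [← hcount]
  exact Nat.nth_count hletter

theorem lt_of_mem_iterSubW (hk : 0 < k) {t x : ℕ} (hx : x ∈ iterSubW k t) : x < k := by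
  induction t generalizing x with
  | zero => simp_all [iterSubW]
  | succ t ih =>
    obtain ⟨j, hj, hx⟩ := List.mem_flatMap.mp (iterSubW_succ t ▸ hx)
    split at hx <;> simp at hx <;> omega

theorem kbonacci_lt (hk : 0 < k) (n : ℕ) : kbonacci k n < k := by
  rw [kbonacci_eq_getD, List.getD_eq_getElem?_getD]
  cases h : (iterSubW k (n + 1))[n]? with
  | none => exact hk
  | some x => exact lt_of_mem_iterSubW hk (List.mem_of_getElem? h)

theorem sum_count_kbonacci (hk : 0 < k) (n : ℕ) :
    ∑ l ∈ Finset.range k, Nat.count (kbonacci k · = l) n = n := by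
  have hmaps : Set.MapsTo (kbonacci k) (Finset.range n) (Finset.range k) :=
    fun m _ => Finset.mem_range.mpr (kbonacci_lt hk m)
  simp only [Nat.count_eq_card_filter_range]
  rw [← Finset.card_eq_sum_card_fiberwise hmaps, Finset.card_range]

theorem count_kbonacci_nth (hk : 2 ≤ k) {l r : ℕ} (h : l + 1 + r < k) (i : ℕ) :
    Nat.count (kbonacci k · = l) (Nat.nth (kbonacci k · = l + 1 + r) i) =
      Nat.nth (kbonacci k · = r) i + 1 := by
  induction l generalizing r with
  | zero =>
    rw [zero_add, add_comm, nth_kbonacci_succ hk (by omega), Nat.count_succ,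
      kbonacci_blockStart hk, count_kbonacci_blockStart_zero hk, if_pos rfl]
  | succ l ih =>
    rw [show l + 1 + 1 + r = l + 1 + r + 1 by omega, nth_kbonacci_succ hk (by omega),
      Nat.count_succ, kbonacci_blockStart hk, if_neg (by omega),
      count_kbonacci_blockStart_succ hk (by omega), ih (by omega), add_zero]

end

/-- The bottom row of the k-bonacci positions table is the enumerating sequence
plus the sum of the other rows: X^{k−1}_n = n + X^0_n + ⋯ + X^{k−2}_n. -/
theorem bottom_row_is_sum (k : ℕ) (hk : 2 ≤ k) (n : ℕ) (hn : 1 ≤ n) :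
    Xpos k (k - 1) n = n + ∑ j ∈ Finset.range (k - 1), Xpos k j n := by
  obtain ⟨K, rfl⟩ : ∃ K, k = K + 1 := ⟨k - 1, by omega⟩
  obtain ⟨i, rfl⟩ : ∃ i, n = i + 1 := ⟨n - 1, by omega⟩
  set a : ℕ → ℕ := fun j => Nat.nth (kbonacci (K + 1) · = j) i
  have hlast : Nat.count (kbonacci (K + 1) · = K) (a K) = i :=
    Nat.count_nth_of_infinite (infinite_setOf_kbonacci_eq hk K.lt_succ_self) i
  have hbelow : ∀ l ∈ Finset.range K,
      Nat.count (kbonacci (K + 1) · = l) (a K) = a (K - 1 - l) + 1 := by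
    intro l hl
    have hl := Finset.mem_range.mp hl
    simpa only [show l + 1 + (K - 1 - l) = K by omega] using
      count_kbonacci_nth hk (l := l) (r := K - 1 - l) (by omega) i
  have htotal := sum_count_kbonacci (k := K + 1) K.succ_pos (a K)
  rw [Finset.sum_range_succ, Finset.sum_congr rfl hbelow, hlast,
    Finset.sum_range_reflect (fun r => a r + 1)] at htotal
  change a K + 1 = i + 1 + ∑ j ∈ Finset.range K, (a j + 1)
  omega
end
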